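/- The group Ξ₀, with its SL₂(ℤ)-action, is generated as a ℤ[SL₂(ℤ)]-module by the modular symbol {∞,0} together with the infinitesimal symbols [0,t]_∞ for t ∈ ℚ. Moreover the kernel W of ∂ : Ξ → Δ (which is contained in Ξ₀) is generated as a ℤ[SL₂(ℤ)]-module by the infinitesimal symbols [0,t]_∞ for t ∈ ℚ. -/

import Mathlib

noncomputable section

open scoped MatrixGroups

/-- The projective line over `ℚ`, i.e. `P¹(ℚ)`. -/
abbrev P1 : Type := Projectivization ℚ (Fin 2 → ℚ)

namespace PaperMS

/-- The linear automorphism of `ℚ²` attached to `γ ∈ GL₂(ℚ)`. -/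
def glEquiv (γ : GL (Fin 2) ℚ) : (Fin 2 → ℚ) ≃ₗ[ℚ] (Fin 2 → ℚ) :=
  LinearMap.GeneralLinearGroup.generalLinearEquiv ℚ (Fin 2 → ℚ)
    (Matrix.GeneralLinearGroup.toLin γ)

lemma glEquiv_one : glEquiv 1 = LinearEquiv.refl ℚ (Fin 2 → ℚ) := by
  simp only [glEquiv, map_one]
  rfl

lemma glEquiv_mul (γ δ : GL (Fin 2) ℚ) :
    glEquiv (γ * δ) = (glEquiv δ).trans (glEquiv γ) := by
  simp only [glEquiv, map_mul]
  rfl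

/-- The Möbius action of `GL₂(ℚ)` on `P¹(ℚ)`. -/
instance : MulAction (GL (Fin 2) ℚ) P1 where
  smul γ := Projectivization.map (glEquiv γ).toLinearMap (glEquiv γ).injective
  one_smul x := by
    induction x using Projectivization.ind with
    | h v hv =>
      show Projectivization.map _ _ _ = _
      rw [Projectivization.map_mk]
      simp [glEquiv_one]
  mul_smul γ δ x := by
    induction x using Projectivization.ind with
    | h v hv =>
      show Projectivization.map _ _ _ =
        Projectivization.map _ _ (Projectivization.map _ _ _)
      rw [Projectivization.map_mk, Projectivization.map_mk, Projectivization.map_mk]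
      simp [glEquiv_mul]

lemma smul_P1_def (γ : GL (Fin 2) ℚ) (x : P1) :
    γ • x = Projectivization.map (glEquiv γ).toLinearMap (glEquiv γ).injective x := rfl

/-- The point of `P¹(ℚ)` attached to a rational number. -/
def ptQ (x : ℚ) : P1 :=
  Projectivization.mk ℚ ![x, 1] (by
    intro h
    have := congrFun h 1
    simp at this)

/-- The point `∞` of `P¹(ℚ)`. -/
def ptInf : P1 :=
  Projectivization.mk ℚ ![1, 0] (by
    intro h
    have := congrFun h 0
    simp at this)

lemma ptQ_ne_ptInf (x : ℚ) : ptQ x ≠ ptInf := by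
  intro h
  rw [ptQ, ptInf, Projectivization.mk_eq_mk_iff] at h
  obtain ⟨a, ha⟩ := h
  have := congrFun ha 1
  simp at this

/-- The set `𝒫(ℚ)` of infinitesimal cusps `π_r(s)`: ordered pairs of distinct
points of `P¹(ℚ)`; the symbol `π_r(s)` corresponds to the pair `(r, s)`. -/
def PP : Type := {p : P1 × P1 // p.1 ≠ p.2}

/-- The infinitesimal cusp `π_r(s)`. -/
def pi' (r s : P1) (h : r ≠ s) : PP := ⟨(r, s), h⟩

instance : MulAction (GL (Fin 2) ℚ) PP where
  smul γ p := ⟨(γ • p.val.1, γ • p.val.2), fun h => p.prop (MulAction.injective γ h)⟩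
  one_smul p := by
    apply Subtype.ext
    show (((1 : GL (Fin 2) ℚ) • p.val.1, (1 : GL (Fin 2) ℚ) • p.val.2) : P1 × P1) = p.val
    simp
  mul_smul γ δ p := by
    apply Subtype.ext
    show ((((γ * δ) : GL (Fin 2) ℚ) • p.val.1, ((γ * δ) : GL (Fin 2) ℚ) • p.val.2) : P1 × P1) = _
    simp [mul_smul]
    rfl

/-- `Ξ`, the group of divisors on `𝒫(ℚ)`. -/
abbrev Xi : Type := PP →₀ ℤ

/-- `Δ`, the group of divisors on `P¹(ℚ)`. -/
abbrev Delta : Type := P1 →₀ ℤ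

/-- `GL₂(ℚ)` acts on divisors on `𝒫(ℚ)`. -/
instance : MulAction (GL (Fin 2) ℚ) Xi where
  smul γ v := Finsupp.mapDomain (γ • ·) v
  one_smul v := by
    show Finsupp.mapDomain _ _ = _
    simp only [one_smul]
    exact Finsupp.mapDomain_id
  mul_smul γ δ v := by
    show Finsupp.mapDomain _ _ = Finsupp.mapDomain _ (Finsupp.mapDomain _ _)
    rw [← Finsupp.mapDomain_comp]
    congr 1
    funext x
    simp [mul_smul]

/-- `GL₂(ℚ)` acts on divisors on `P¹(ℚ)`. -/
instance : MulAction (GL (Fin 2) ℚ) Delta where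
  smul γ v := Finsupp.mapDomain (γ • ·) v
  one_smul v := by
    show Finsupp.mapDomain _ _ = _
    simp only [one_smul]
    exact Finsupp.mapDomain_id
  mul_smul γ δ v := by
    show Finsupp.mapDomain _ _ = Finsupp.mapDomain _ (Finsupp.mapDomain _ _)
    rw [← Finsupp.mapDomain_comp]
    congr 1
    funext x
    simp [mul_smul]

/-- The degree of a divisor on `𝒫(ℚ)`. -/
def degXi : Xi →+ ℤ := Finsupp.liftAddHom fun _ => AddMonoidHom.id ℤ

/-- The degree of a divisor on `P¹(ℚ)`. -/
def degDelta : Delta →+ ℤ := Finsupp.liftAddHom fun _ => AddMonoidHom.id ℤ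

/-- `Ξ₀`, the subgroup of degree-zero divisors on `𝒫(ℚ)`. -/
def Xi0 : AddSubgroup Xi := degXi.ker

/-- `Δ₀`, the subgroup of degree-zero divisors on `P¹(ℚ)`. -/
def Delta0 : AddSubgroup Delta := degDelta.ker

/-- The divisor attached to a point of `𝒫(ℚ)`. -/
def dv (p : PP) : Xi := Finsupp.single p 1

/-- The divisor attached to a point of `P¹(ℚ)`. -/
def dvP (r : P1) : Delta := Finsupp.single r 1

/-- `[c₁, c₂] = {c₂} - {c₁} ∈ Ξ₀`. -/
def br (c₁ c₂ : PP) : Xi := dv c₂ - dv c₁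

/-- The modular symbol `{r, s} = [π_r(s), π_s(r)]`. -/
def msym (r s : P1) (h : r ≠ s) : Xi := br (pi' r s h) (pi' s r h.symm)

/-- The infinitesimal symbol `[s, t]_r = [π_r(s), π_r(t)]`. -/
def isym (r s t : P1) (hs : s ≠ r) (ht : t ≠ r) : Xi :=
  br (pi' r s hs.symm) (pi' r t ht.symm)

lemma degXi_single (p : PP) (n : ℤ) : degXi (Finsupp.single p n) = n := by
  simp [degXi]

lemma degDelta_single (r : P1) (n : ℤ) : degDelta (Finsupp.single r n) = n := by
  simp [degDelta]

lemma br_mem_Xi0 (c₁ c₂ : PP) : br c₁ c₂ ∈ Xi0 := by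
  simp [br, Xi0, AddMonoidHom.mem_ker, dv, degXi_single]

lemma smul_mem_Xi0 (γ : GL (Fin 2) ℚ) {v : Xi} (hv : v ∈ Xi0) : γ • v ∈ Xi0 := by
  have h : degXi (γ • v) = degXi v := by
    show degXi (Finsupp.mapDomain (γ • ·) v) = degXi v
    simp only [degXi, Finsupp.liftAddHom_apply]
    exact Finsupp.sum_mapDomain_index (fun _ => rfl) (fun _ _ _ => rfl)
  simpa [Xi0, AddMonoidHom.mem_ker, h] using hv

lemma smul_mem_Delta0 (γ : GL (Fin 2) ℚ) {v : Delta} (hv : v ∈ Delta0) : γ • v ∈ Delta0 := by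
  have h : degDelta (γ • v) = degDelta v := by
    show degDelta (Finsupp.mapDomain (γ • ·) v) = degDelta v
    simp only [degDelta, Finsupp.liftAddHom_apply]
    exact Finsupp.sum_mapDomain_index (fun _ => rfl) (fun _ _ _ => rfl)
  simpa [Delta0, AddMonoidHom.mem_ker, h] using hv

lemma brP_mem_Delta0 (r s : P1) : dvP s - dvP r ∈ Delta0 := by
  simp [Delta0, AddMonoidHom.mem_ker, dvP, degDelta_single]

/-- The boundary map `∂ : Ξ → Δ`, induced by `π_r(s) ↦ r`. -/
def bdry : Xi →+ Delta := Finsupp.mapDomain.addMonoidHom fun p : PP => p.val.1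

/-- The embedding of `SL₂(ℤ)` in `GL₂(ℚ)`. -/
def toGLQ : SL(2, ℤ) →* GL (Fin 2) ℚ :=
  Matrix.SpecialLinearGroup.toGL.comp (Matrix.SpecialLinearGroup.map (Int.castRingHom ℚ))

end PaperMS

namespace PaperMS

/-- The modular symbol `{∞, 0}`. -/
def symInfZero : Xi := msym ptInf (ptQ 0) (ptQ_ne_ptInf 0).symm

/-- The infinitesimal symbol `[0, t]_∞` for `t ∈ ℚ`. -/
def isymZero (t : ℚ) : Xi :=
  isym ptInf (ptQ 0) (ptQ t) (ptQ_ne_ptInf 0) (ptQ_ne_ptInf t)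

/-! ### Auxiliary lemmas -/

lemma smul_dv (g : GL (Fin 2) ℚ) (p : PP) : g • dv p = dv (g • p) := by
  show Finsupp.mapDomain _ _ = _
  simp [dv, Finsupp.mapDomain_single]

lemma smul_Xi_sub (g : GL (Fin 2) ℚ) (u v : Xi) : g • (u - v) = g • u - g • v := by
  show Finsupp.mapDomain (g • ·) (u - v) = Finsupp.mapDomain (g • ·) u - Finsupp.mapDomain (g • ·) v
  exact (Finsupp.mapDomain.addMonoidHom (g • ·)).map_sub u v

lemma smul_pi' (g : GL (Fin 2) ℚ) (r s : P1) (h : r ≠ s) :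
    g • pi' r s h = pi' (g • r) (g • s) (fun hh => h (MulAction.injective g hh)) := rfl

lemma smul_br (g : GL (Fin 2) ℚ) (c₁ c₂ : PP) : g • br c₁ c₂ = br (g • c₁) (g • c₂) := by
  rw [br, smul_Xi_sub, smul_dv, smul_dv]; rfl

lemma bdry_dv (p : PP) : bdry (dv p) = dvP p.val.1 := by
  simp [bdry, dv, dvP, Finsupp.mapDomain_single]

lemma bdry_br (c₁ c₂ : PP) : bdry (br c₁ c₂) = dvP c₂.val.1 - dvP c₁.val.1 := by
  rw [br, map_sub, bdry_dv, bdry_dv]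

lemma fst_smul_PP (g : GL (Fin 2) ℚ) (p : PP) : (g • p).val.1 = g • p.val.1 := rfl

lemma deg_bdry (v : Xi) : degDelta (bdry v) = degXi v := by
  show degDelta (Finsupp.mapDomain _ v) = degXi v
  simp only [degDelta, degXi, Finsupp.liftAddHom_apply]
  exact Finsupp.sum_mapDomain_index (fun _ => rfl) (fun _ _ _ => rfl)

/-! ### Points and the action, explicitly -/

lemma mk_congr (v w : Fin 2 → ℚ) (hv : v ≠ 0) (h : v = w) :
    Projectivization.mk ℚ v hv = Projectivization.mk ℚ w (h ▸ hv) := by subst h; rfl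

lemma ptQ_eq (x : ℚ) : ptQ x = Projectivization.mk ℚ ![x, 1] (by
    intro h; have := congrFun h 1; simp at this) := rfl

lemma ptInf_eq : ptInf = Projectivization.mk ℚ ![1, 0] (by
    intro h; have := congrFun h 0; simp at this) := rfl

lemma smul_mk (γ : SL(2, ℤ)) (v : Fin 2 → ℚ) (hv : v ≠ 0)
    (w : Fin 2 → ℚ) (hw : ((γ : Matrix (Fin 2) (Fin 2) ℤ).map Int.cast).mulVec v = w)
    (hw0 : w ≠ 0) :
    toGLQ γ • Projectivization.mk ℚ v hv = Projectivization.mk ℚ w hw0 := by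
  subst hw
  rw [smul_P1_def, Projectivization.map_mk]
  rfl

lemma mulVec_cast (a b c d : ℤ) (x y : ℚ) :
    ((!![a, b; c, d] : Matrix (Fin 2) (Fin 2) ℤ).map Int.cast).mulVec ![x, y]
      = ![a * x + b * y, c * x + d * y] := by
  funext i
  fin_cases i <;>
    simp [Matrix.mulVec, dotProduct, Fin.sum_univ_two]

lemma mk_eq_ptQ (p q : ℚ) (hq : q ≠ 0) (h : ![p, q] ≠ 0) :
    Projectivization.mk ℚ ![p, q] h = ptQ (p / q) := by
  rw [ptQ_eq, Projectivization.mk_eq_mk_iff']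
  refine ⟨q, ?_⟩
  funext i
  fin_cases i <;> simp <;> field_simp

lemma mk_eq_ptInf (p : ℚ) (hp : p ≠ 0) (h : ![p, 0] ≠ 0) :
    Projectivization.mk ℚ ![p, 0] h = ptInf := by
  rw [ptInf_eq, Projectivization.mk_eq_mk_iff']
  exact ⟨p, by funext i; fin_cases i <;> simp⟩

lemma P1_cases (r : P1) : r = ptInf ∨ ∃ x : ℚ, r = ptQ x := by
  induction r using Projectivization.ind with
  | h v hv =>
    have hveq : v = ![v 0, v 1] := by funext i; fin_cases i <;> rfl
    by_cases h1 : v 1 = 0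
    · left
      have h0 : v 0 ≠ 0 := by
        intro h0; apply hv; funext i; fin_cases i <;> simp [h0, h1]
      have hv2 : v = ![v 0, 0] := by rw [← h1]; exact hveq
      rw [mk_congr v _ hv hv2]
      exact mk_eq_ptInf _ h0 _
    · right
      refine ⟨v 0 / v 1, ?_⟩
      rw [mk_congr v _ hv hveq]
      exact mk_eq_ptQ _ _ h1 _

/-- The point of `P¹(ℚ)` attached to a nonzero pair of integers. -/
def mkZ (p q : ℤ) (h : ¬(p = 0 ∧ q = 0)) : P1 :=
  Projectivization.mk ℚ ![(p : ℚ), (q : ℚ)] (by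
    intro hv
    refine h ⟨?_, ?_⟩
    · have := congrFun hv 0; simpa using this
    · have := congrFun hv 1; simpa using this)

lemma isCoprime_not_both_zero {p q : ℤ} (h : IsCoprime p q) : ¬(p = 0 ∧ q = 0) := by
  rintro ⟨rfl, rfl⟩
  exact not_isUnit_zero (isCoprime_zero_left.mp h)

/-- The `SL₂(ℤ)` matrix `!![p, -b; q, a]` built from a Bézout relation. -/
def bezSL (p q a b : ℤ) (hdet : a * p + b * q = 1) : SL(2, ℤ) :=
  ⟨!![p, -b; q, a], by
    rw [Matrix.det_fin_two_of]; ring_nf; linarith [hdet]⟩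

lemma bezSL_coe (p q a b : ℤ) (hdet : a * p + b * q = 1) :
    ((bezSL p q a b hdet : SL(2, ℤ)) : Matrix (Fin 2) (Fin 2) ℤ) = !![p, -b; q, a] := rfl

lemma bezSL_smul_inf (p q a b : ℤ) (hdet : a * p + b * q = 1)
    (h : ¬(p = 0 ∧ q = 0)) :
    toGLQ (bezSL p q a b hdet) • ptInf = mkZ p q h := by
  rw [ptInf_eq, mkZ]
  refine smul_mk _ _ _ _ ?_ _
  rw [bezSL_coe, mulVec_cast]
  funext i; fin_cases i <;> push_cast <;> ring_nf <;> simp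

lemma bezSL_smul_zero (p q a b : ℤ) (hdet : a * p + b * q = 1)
    (h : ¬(-b = 0 ∧ a = 0)) :
    toGLQ (bezSL p q a b hdet) • ptQ 0 = mkZ (-b) a h := by
  rw [ptQ_eq, mkZ]
  refine smul_mk _ _ _ _ ?_ _
  rw [bezSL_coe, mulVec_cast]
  funext i; fin_cases i <;> push_cast <;> ring_nf <;> simp

/-- `SL₂(ℤ)` acts transitively on `P¹(ℚ)`. -/
lemma exists_smul_ptInf (r : P1) : ∃ γ : SL(2, ℤ), toGLQ γ • ptInf = r := by
  rcases P1_cases r with rfl | ⟨x, rfl⟩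
  · exact ⟨1, by simp⟩
  · have hco : IsCoprime (x.num) (x.den : ℤ) := by
      rw [Int.isCoprime_iff_gcd_eq_one]
      exact x.reduced
    obtain ⟨a, b, hab⟩ := hco
    have h : ¬(x.num = 0 ∧ (x.den : ℤ) = 0) := isCoprime_not_both_zero ⟨a, b, hab⟩
    refine ⟨bezSL x.num x.den a b hab, ?_⟩
    rw [bezSL_smul_inf x.num x.den a b hab h, mkZ]
    have hden : ((x.den : ℤ) : ℚ) ≠ 0 := by
      simp [x.den_nz]
    rw [mk_eq_ptQ _ _ hden]
    congr 1
    push_cast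
    exact Rat.num_div_den x

/-! ### Boundary computations -/

lemma mkZ_num_den (x : ℚ) (h : ¬(x.num = 0 ∧ (x.den : ℤ) = 0)) :
    mkZ x.num x.den h = ptQ x := by
  rw [mkZ]
  have hden : ((x.den : ℤ) : ℚ) ≠ 0 := by simp [x.den_nz]
  rw [mk_eq_ptQ _ _ hden]
  congr 1
  push_cast
  exact Rat.num_div_den x

/-- The set of generators in the first part of the statement. -/
def setFull : Set Xi :=
  {x : Xi | ∃ γ : SL(2, ℤ),
    x = toGLQ γ • symInfZero ∨ ∃ t : ℚ, x = toGLQ γ • isymZero t}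

/-- The set of generators in the last part of the statement. -/
def setW : Set Xi := {x : Xi | ∃ (γ : SL(2, ℤ)) (t : ℚ), x = toGLQ γ • isymZero t}

lemma bdry_smul_symInfZero (γ : SL(2, ℤ)) :
    bdry (toGLQ γ • symInfZero) =
      dvP (toGLQ γ • ptQ 0) - dvP (toGLQ γ • ptInf) := by
  rw [symInfZero, msym, smul_br, bdry_br]
  rfl

lemma bdry_smul_isymZero (γ : SL(2, ℤ)) (t : ℚ) :
    bdry (toGLQ γ • isymZero t) = 0 := by
  rw [isymZero, isym, smul_br, bdry_br]
  show dvP (toGLQ γ • ptInf) - dvP (toGLQ γ • ptInf) = 0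
  exact sub_self _

/-! ### The Manin continued-fraction argument -/

lemma natAbs_emod_lt (a q : ℤ) (hq : q ≠ 0) : (a % q).natAbs < q.natAbs := by
  have h1 : 0 ≤ a % q := Int.emod_nonneg a hq
  have h2 : a % q < |q| := by have := Int.emod_lt a hq; rwa [Int.abs_eq_natAbs]
  rw [Int.abs_eq_natAbs] at h2
  omega

lemma mkZ_eq_ptInf (p : ℤ) (hp : p ≠ 0) (h : ¬(p = 0 ∧ (0 : ℤ) = 0)) :
    mkZ p 0 h = ptInf := by
  rw [mkZ, mk_congr _ ![(p : ℚ), 0] _ (by norm_num)]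
  exact mk_eq_ptInf _ (by exact_mod_cast hp) _

lemma manin_aux : ∀ n : ℕ, ∀ p q : ℤ, q.natAbs ≤ n → ∀ (hco : IsCoprime p q),
    ∃ y ∈ AddSubgroup.closure setFull,
      bdry y = dvP (mkZ p q (isCoprime_not_both_zero hco)) - dvP ptInf := by
  intro n
  induction n with
  | zero =>
    intro p q hq hco
    have hq0 : q = 0 := by omega
    subst hq0
    have hp : p ≠ 0 := fun hp => isCoprime_not_both_zero hco ⟨hp, rfl⟩
    refine ⟨0, zero_mem _, ?_⟩
    rw [map_zero, mkZ_eq_ptInf p hp, sub_self]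
  | succ n ih =>
    intro p q hqn hco
    by_cases hq : q = 0
    · subst hq
      have hp : p ≠ 0 := fun hp => isCoprime_not_both_zero hco ⟨hp, rfl⟩
      refine ⟨0, zero_mem _, ?_⟩
      rw [map_zero, mkZ_eq_ptInf p hp, sub_self]
    · obtain ⟨a, b, hab⟩ := hco
      set a' := a % q with ha'
      set b' := b + (a / q) * p with hb'
      have hdet : a' * p + b' * q = 1 := by
        rw [ha', hb', Int.emod_def]
        linear_combination hab
      have hco' : IsCoprime (-b') a' := ⟨-q, p, by linear_combination hdet⟩
      have hlt : a'.natAbs ≤ n := by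
        have := natAbs_emod_lt a q hq
        omega
      obtain ⟨y', hy'mem, hy'⟩ := ih (-b') a' hlt hco'
      set γ := bezSL p q a' b' hdet with hγ
      refine ⟨y' - (toGLQ γ • symInfZero), sub_mem hy'mem
        (AddSubgroup.subset_closure ⟨γ, Or.inl rfl⟩), ?_⟩
      rw [map_sub, hy', bdry_smul_symInfZero,
        bezSL_smul_zero p q a' b' hdet (isCoprime_not_both_zero hco'),
        bezSL_smul_inf p q a' b' hdet (isCoprime_not_both_zero ⟨a, b, hab⟩)]
      abel

lemma exists_bdry_eq (r : P1) :
    ∃ y ∈ AddSubgroup.closure setFull, bdry y = dvP r - dvP ptInf := by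
  rcases P1_cases r with rfl | ⟨x, rfl⟩
  · exact ⟨0, zero_mem _, by rw [map_zero, sub_self]⟩
  · have hco : IsCoprime (x.num) (x.den : ℤ) := by
      rw [Int.isCoprime_iff_gcd_eq_one]; exact x.reduced
    obtain ⟨y, hy, hby⟩ := manin_aux (x.den : ℤ).natAbs x.num x.den le_rfl hco
    exact ⟨y, hy, by rwa [mkZ_num_den] at hby⟩

/-! ### Generation of the kernel of the boundary map -/

lemma closW_le_ker : AddSubgroup.closure setW ≤ bdry.ker := by
  rw [AddSubgroup.closure_le]
  rintro x ⟨γ, t, rfl⟩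
  exact bdry_smul_isymZero γ t

lemma exists_isym_translate (γ : SL(2, ℤ)) (p : PP)
    (h : toGLQ γ • ptInf = p.val.1) :
    ∃ u : ℚ, toGLQ γ • isymZero u =
      dv p - dv (pi' p.val.1 (toGLQ γ • ptQ 0)
        (h ▸ fun hh => (ptQ_ne_ptInf 0) (MulAction.injective (toGLQ γ) hh.symm))) := by
  have hs : (toGLQ γ)⁻¹ • p.val.2 ≠ ptInf := by
    intro hh
    apply p.prop
    rw [← h, ← hh, smul_inv_smul]
  rcases P1_cases ((toGLQ γ)⁻¹ • p.val.2) with hinf | ⟨u, hu⟩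
  · exact absurd hinf hs
  refine ⟨u, ?_⟩
  have hgu : toGLQ γ • ptQ u = p.val.2 := by rw [← hu, smul_inv_smul]
  rw [isymZero, isym, smul_br, br, smul_pi', smul_pi']
  congr 1
  · show dv _ = dv p
    congr 1
    refine Subtype.ext (Prod.ext ?_ ?_) <;> simp only [pi'] <;> [exact h; exact hgu]
  · congr 1
    exact Subtype.ext (Prod.ext h rfl)

lemma fiber_mem (p p' : PP) (h : p.val.1 = p'.val.1) :
    dv p - dv p' ∈ AddSubgroup.closure setW := by
  obtain ⟨γ, hγ⟩ := exists_smul_ptInf p.val.1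
  obtain ⟨u, hu⟩ := exists_isym_translate γ p hγ
  obtain ⟨u', hu'⟩ := exists_isym_translate γ p' (h ▸ hγ)
  have hpi : pi' p.val.1 (toGLQ γ • ptQ 0)
        (hγ ▸ fun hh => (ptQ_ne_ptInf 0) (MulAction.injective (toGLQ γ) hh.symm))
      = pi' p'.val.1 (toGLQ γ • ptQ 0)
        ((h ▸ hγ) ▸ fun hh => (ptQ_ne_ptInf 0) (MulAction.injective (toGLQ γ) hh.symm)) := by
    exact Subtype.ext (Prod.ext h rfl)
  have key : dv p - dv p' = (toGLQ γ • isymZero u) - (toGLQ γ • isymZero u') := by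
    rw [hu, hu', hpi]
    abel
  rw [key]
  exact sub_mem (AddSubgroup.subset_closure ⟨γ, u, rfl⟩)
    (AddSubgroup.subset_closure ⟨γ, u', rfl⟩)

/-- A section of the base-point map `PP → P1`. -/
def secPP (r : P1) : PP :=
  haveI := Classical.dec (r = ptInf)
  if h : r = ptInf then pi' r (ptQ 0) (fun hh => ptQ_ne_ptInf 0 (hh.symm.trans h))
  else pi' r ptInf h

lemma secPP_fst (r : P1) : (secPP r).val.1 = r := by
  unfold secPP
  split <;> rfl

lemma sub_mapDomain_mem (v : Xi) :
    v - Finsupp.mapDomain (fun p : PP => secPP p.val.1) v ∈ AddSubgroup.closure setW := by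
  induction v using Finsupp.induction with
  | zero => simpa using zero_mem _
  | single_add a n w _ _ ih =>
    rw [Finsupp.mapDomain_add, Finsupp.mapDomain_single]
    have hsplit : (Finsupp.single a n + w) -
        (Finsupp.single (secPP a.val.1) n + Finsupp.mapDomain (fun p : PP => secPP p.val.1) w)
        = (Finsupp.single a n - Finsupp.single (secPP a.val.1) n) +
          (w - Finsupp.mapDomain (fun p : PP => secPP p.val.1) w) := by abel
    rw [hsplit]
    refine add_mem ?_ ih
    have hsm : Finsupp.single a n - Finsupp.single (secPP a.val.1) n
        = n • (dv a - dv (secPP a.val.1)) := by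
      rw [smul_sub, dv, dv, Finsupp.smul_single, Finsupp.smul_single, smul_eq_mul, mul_one]
    rw [hsm]
    exact zsmul_mem (fiber_mem a (secPP a.val.1) (secPP_fst _).symm) n

lemma ker_le_closW : bdry.ker ≤ AddSubgroup.closure setW := by
  intro v hv
  have hb : Finsupp.mapDomain (fun p : PP => p.val.1) v = 0 := hv
  have h2 : Finsupp.mapDomain (fun p : PP => secPP p.val.1) v = 0 := by
    have hcomp : (fun p : PP => secPP p.val.1) = secPP ∘ (fun p : PP => p.val.1) := rfl
    rw [hcomp, Finsupp.mapDomain_comp, hb, Finsupp.mapDomain_zero]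
  have := sub_mapDomain_mem v
  rwa [h2, sub_zero] at this

/-- The group `Ξ₀`, with its `SL₂(ℤ)`-action, is generated as a
`ℤ[SL₂(ℤ)]`-module by the modular symbol `{∞,0}` together with the infinitesimal symbols
`[0,t]_∞` for `t ∈ ℚ`; and the kernel `W` of `∂ : Ξ → Δ` (which is contained in `Ξ₀`) is
generated as a `ℤ[SL₂(ℤ)]`-module by the infinitesimal symbols `[0,t]_∞` for `t ∈ ℚ`. -/
theorem statement3 :
    (AddSubgroup.closure
        {x : Xi | ∃ γ : SL(2, ℤ),
          x = toGLQ γ • symInfZero ∨ ∃ t : ℚ, x = toGLQ γ • isymZero t} = Xi0) ∧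
    bdry.ker ≤ Xi0 ∧
    (AddSubgroup.closure
        {x : Xi | ∃ (γ : SL(2, ℤ)) (t : ℚ), x = toGLQ γ • isymZero t} = bdry.ker) := by
  have hW : AddSubgroup.closure setW = bdry.ker := le_antisymm closW_le_ker ker_le_closW
  have hker_le : bdry.ker ≤ Xi0 := by
    intro v hv
    show degXi v = 0
    rw [← deg_bdry v]
    have hv0 : bdry v = 0 := hv
    rw [hv0, map_zero]
  refine ⟨?_, hker_le, hW⟩
  apply le_antisymm
  · rw [AddSubgroup.closure_le]
    rintro x ⟨γ, rfl | ⟨t, rfl⟩⟩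
    · exact smul_mem_Xi0 _ (br_mem_Xi0 _ _)
    · exact smul_mem_Xi0 _ (br_mem_Xi0 _ _)
  · intro x hx
    have hdeg : degXi x = 0 := hx
    choose M hM1 hM2 using exists_bdry_eq
    set d := bdry x with hd
    set y := d.sum (fun r n => n • M r) with hy
    have hymem : y ∈ AddSubgroup.closure setFull := by
      rw [hy, Finsupp.sum]
      exact sum_mem fun r _ => zsmul_mem (hM1 r) _
    have hdd0 : degDelta d = 0 := by rw [hd, deg_bdry, hdeg]
    have hbd : bdry y = d := by
      rw [hy, map_finsuppSum]
      have h1 : (d.sum fun r n => bdry (n • M r))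
          = d.sum fun r n => (Finsupp.single r n - n • dvP ptInf) := by
        apply Finsupp.sum_congr
        intro r _
        rw [map_zsmul, hM2 r, smul_sub]
        congr 1
        rw [dvP, Finsupp.smul_single, smul_eq_mul, mul_one]
      rw [h1, Finsupp.sum_sub, Finsupp.sum_single]
      have h2 : (d.sum fun _ n => n • dvP ptInf) = degDelta d • dvP ptInf := by
        rw [Finsupp.sum, ← Finset.sum_smul]
        congr 1
      rw [h2, hdd0, zero_smul, sub_zero]
    have hxy : x - y ∈ AddSubgroup.closure setFull := by
      have hker : x - y ∈ bdry.ker := by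
        show bdry (x - y) = 0
        rw [map_sub, hbd, ← hd, sub_self]
      have hle : AddSubgroup.closure setW ≤ AddSubgroup.closure setFull :=
        AddSubgroup.closure_mono (by rintro z ⟨γ, t, rfl⟩; exact ⟨γ, Or.inr ⟨t, rfl⟩⟩)
      exact hle (hW ▸ hker)
    have : x = (x - y) + y := by abel
    rw [this]
    exact add_mem hxy hymem

end PaperMS
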